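/- arXiv:1905.12626 — 3 statements merged into one kernel-verified Lean document; each statement's English description precedes it below -/
import Mathlib

section
/- Let v < 0 be real and set Δ̃ = (1/27)(−v)(v − 1)² > 0. Then the transversality quantity C₄ = [cbrt(−1 + 9v + 27√Δ̃) − cbrt(−1 + 9v − 27√Δ̃)] / (36√Δ̃) is strictly positive; in particular C₄ ≠ 0. -/
/-- The real cube root of a real number: `sign(x) · |x|^(1/3)`. -/
noncomputable def cbrt (x : ℝ) : ℝ := Real.sign x * |x| ^ ((1 : ℝ) / 3)

lemma cbrt_pow_three (x : ℝ) : cbrt x ^ 3 = x := by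
  have hroot : (|x| ^ ((1 : ℝ) / 3)) ^ 3 = |x| := by
    rw [one_div]
    exact_mod_cast Real.rpow_inv_natCast_pow (abs_nonneg x) three_ne_zero
  rw [cbrt, mul_pow, hroot]
  rcases lt_trichotomy x 0 with hx | rfl | hx
  · norm_num [Real.sign_of_neg hx, abs_of_neg hx]
  · simp
  · simp [Real.sign_of_pos hx, abs_of_pos hx]

lemma cbrt_strictMono : StrictMono cbrt := fun x y hxy => by
  rwa [← (Odd.strictMono_pow (by decide : Odd 3)).lt_iff_lt, cbrt_pow_three, cbrt_pow_three]

lemma cbrt_sub_cbrt_pos (a : ℝ) {s : ℝ} (hs : 0 < s) : 0 < cbrt (a + s) - cbrt (a - s) :=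
  sub_pos.mpr (cbrt_strictMono (by linarith))

/-- Transversality condition (A1): for `v < 0` and `Δ̃ = (1/27)(-v)(v-1)²`,
the quantity `C₄ = (cbrt(-1 + 9v + 27√Δ̃) - cbrt(-1 + 9v - 27√Δ̃)) / (36√Δ̃)`
is strictly positive; in particular `C₄ ≠ 0`. -/
theorem transversality_C4 (v Δ' : ℝ) (hv : v < 0)
    (hΔ' : Δ' = 1/27 * (-v) * (v - 1) ^ 2) :
    0 < (cbrt (-1 + 9 * v + 27 * Real.sqrt Δ') -
          cbrt (-1 + 9 * v - 27 * Real.sqrt Δ')) / (36 * Real.sqrt Δ') ∧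
    (cbrt (-1 + 9 * v + 27 * Real.sqrt Δ') -
      cbrt (-1 + 9 * v - 27 * Real.sqrt Δ')) / (36 * Real.sqrt Δ') ≠ 0 := by
  have hΔ'_pos : 0 < Δ' := by
    rw [hΔ']
    have : 0 < (v - 1) ^ 2 := by nlinarith
    have : 0 < -v := by linarith
    positivity
  have hsqrt : 0 < Real.sqrt Δ' := Real.sqrt_pos.mpr hΔ'_pos
  have hC4 : 0 < (cbrt (-1 + 9 * v + 27 * Real.sqrt Δ') -
      cbrt (-1 + 9 * v - 27 * Real.sqrt Δ')) / (36 * Real.sqrt Δ') :=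
    div_pos (cbrt_sub_cbrt_pos _ (by positivity)) (by positivity)
  exact ⟨hC4, hC4.ne'⟩
end

section
/- Let v, ρ be real numbers with h_k(ρ) = (k³ − 1)ρ² + (k² − 1)ρ − (k − 1)v ≠ 0 for all k ≥ 2. For each real initial value a, let b(a) : ℕ≥1 → ℝ be the sequence defined by b(a)₁ = a and b(a)_k = −(1/h_k(ρ))·Σ_{i=1}^{k−1} b(a)_{k−i}·b(a)_i·(k − i) for k ≥ 2. Then for every real c and every k ≥ 1, b(c·a)_k = c^k · b(a)_k. In particular, b(a)_k = L_k · a^k where L_k := b(1)_k depends only on v and ρ. -/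
/-! The recursion for `b_k` is a quadratic convolution in which every summand
`b_{k-i} b_i` has total index `k`. Hence, by strong induction, scaling `b₁` by `c`
scales each summand of the `k`-th sum, and so `b_k`, by `c^k`, while the factor
`-1/h_k` depends on `k` alone. -/

section QuadraticConvolution

variable {R : Type*} [CommSemiring R]

theorem sum_Ico_convolution_eq_pow_mul {f g : ℕ → R} {w : ℕ → ℕ → R} {c : R} {k : ℕ}
    (hfg : ∀ i, 1 ≤ i → i < k → f i = c ^ i * g i) :
    ∑ i ∈ Finset.Ico 1 k, f (k - i) * f i * w k i
      = c ^ k * ∑ i ∈ Finset.Ico 1 k, g (k - i) * g i * w k i := by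
  rw [Finset.mul_sum]
  refine Finset.sum_congr rfl fun i hi => ?_
  obtain ⟨hi1, hik⟩ := Finset.mem_Ico.mp hi
  rw [hfg i hi1 hik, hfg (k - i) (by omega) (by omega), ← pow_sub_mul_pow c hik.le]
  ring

theorem eq_pow_mul_of_convolution_recursion {f g q : ℕ → R} {w : ℕ → ℕ → R} {c : R}
    (hf1 : f 1 = c * g 1)
    (hf : ∀ k, 2 ≤ k → f k = q k * ∑ i ∈ Finset.Ico 1 k, f (k - i) * f i * w k i)
    (hg : ∀ k, 2 ≤ k → g k = q k * ∑ i ∈ Finset.Ico 1 k, g (k - i) * g i * w k i) :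
    ∀ k, 1 ≤ k → f k = c ^ k * g k := by
  intro k
  induction k using Nat.strong_induction_on with
  | _ k ih =>
    intro hk
    rcases hk.eq_or_lt with rfl | hk2
    · rw [hf1, pow_one]
    · rw [hf k hk2, hg k hk2, sum_Ico_convolution_eq_pow_mul fun i hi hik => ih i hik hi]
      ring

end QuadraticConvolution

theorem homoclinic_coefficients_homogeneous_general (h : ℕ → ℝ)
    (b : ℝ → ℕ → ℝ)
    (hb1 : ∀ a : ℝ, b a 1 = a)
    (hbrec : ∀ (a : ℝ) (k : ℕ), 2 ≤ k →
      b a k = -(1 / h k) * ∑ i ∈ Finset.Ico 1 k, b a (k - i) * b a i * ((k - i : ℕ) : ℝ)) :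
    (∀ (c a : ℝ) (k : ℕ), 1 ≤ k → b (c * a) k = c ^ k * b a k) ∧
    (∀ (a : ℝ) (k : ℕ), 1 ≤ k → b a k = b 1 k * a ^ k) := by
  have homogeneous : ∀ (c a : ℝ) (k : ℕ), 1 ≤ k → b (c * a) k = c ^ k * b a k :=
    fun c a => eq_pow_mul_of_convolution_recursion (by rw [hb1, hb1])
      (hbrec (c * a)) (hbrec a)
  refine ⟨homogeneous, fun a k hk => ?_⟩
  rw [← mul_one a, homogeneous a 1 k hk, mul_one, mul_comm]

/-- Homogeneity of the homoclinic-orbit series coefficients: if `b(a)` is the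
sequence with `b(a)₁ = a` and
`b(a)_k = -(1/h_k(ρ))·Σ_{i=1}^{k-1} b(a)_{k-i} b(a)_i (k-i)` for `k ≥ 2`, where
`h_k(ρ) = (k³-1)ρ² + (k²-1)ρ - (k-1)v ≠ 0` for all `k ≥ 2`, then
`b(c·a)_k = c^k·b(a)_k`; in particular `b(a)_k = L_k·a^k` with `L_k = b(1)_k`. -/
theorem homoclinic_coefficients_homogeneous (v ρ : ℝ) (h : ℕ → ℝ)
    (hdef : ∀ k : ℕ, h k = ((k : ℝ) ^ 3 - 1) * ρ ^ 2 + ((k : ℝ) ^ 2 - 1) * ρ - ((k : ℝ) - 1) * v)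
    (hne : ∀ k, 2 ≤ k → h k ≠ 0)
    (b : ℝ → ℕ → ℝ)
    (hb1 : ∀ a : ℝ, b a 1 = a)
    (hbrec : ∀ (a : ℝ) (k : ℕ), 2 ≤ k →
      b a k = -(1 / h k) * ∑ i ∈ Finset.Ico 1 k, b a (k - i) * b a i * ((k - i : ℕ) : ℝ)) :
    (∀ (c a : ℝ) (k : ℕ), 1 ≤ k → b (c * a) k = c ^ k * b a k) ∧
    (∀ (a : ℝ) (k : ℕ), 1 ≤ k → b a k = b 1 k * a ^ k) :=
  homoclinic_coefficients_homogeneous_general h b hb1 hbrec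
end

section
/- Let v, ρ be real numbers, M > 0, k ≥ 1 a natural number, and (b_i) real numbers. Assume h_{k+1}(ρ) = ((k+1)³ − 1)ρ² + ((k+1)² − 1)ρ − k·v > 0 with k / h_{k+1}(ρ) ≤ 1/(k+1), that |b_i| ≤ |b₁|^i / (i·M^i) for all 1 ≤ i ≤ k, and that |b_{k+1}| ≤ (1/h_{k+1}(ρ))·Σ_{i=1}^{k} |b_{k+1−i}|·|b_i|·(k+1−i). Then |b_{k+1}| ≤ |b₁|^{k+1} / ((k+1)·M^{k+1}). -/
/-!
Writing `r = |b₁| / M`, the inductive bound reads `|b_i| ≤ r^i / i`. The weight `k + 1 - i` cancels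
the denominator of `|b_{k+1-i}|`, so the `i`-th term of the convolution is at most `r^{k+1} / i`, and
the harmonic sum `∑_{i ≤ k} 1/i ≤ k` bounds the whole sum by `k r^{k+1}`. The hypothesis
`k / h_{k+1}(ρ) ≤ 1 / (k + 1)` then turns this into `|b_{k+1}| ≤ r^{k+1} / (k + 1)`.
-/

open Finset

lemma sum_Ico_one_one_div_le (k : ℕ) : ∑ i ∈ Ico 1 (k + 1), 1 / (i : ℝ) ≤ k := by
  calc ∑ i ∈ Ico 1 (k + 1), 1 / (i : ℝ) ≤ ∑ _i ∈ Ico 1 (k + 1), (1 : ℝ) := by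
        refine sum_le_sum fun i hi => ?_
        have hi1 : (1 : ℝ) ≤ i := by exact_mod_cast (mem_Ico.mp hi).1
        exact div_le_one_of_le₀ hi1 (by positivity)
    _ = k := by simp

lemma abs_mul_abs_mul_le_pow_div {x y r : ℝ} {i j : ℕ} (hj : 0 < j)
    (hx : |x| ≤ r ^ j / j) (hy : |y| ≤ r ^ i / i) :
    |x| * |y| * j ≤ r ^ (i + j) / i := by
  have hj' : (0 : ℝ) < j := by exact_mod_cast hj
  calc |x| * |y| * j ≤ r ^ j / j * (r ^ i / i) * j := by
        gcongr
        exact (abs_nonneg x).trans hx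
    _ = r ^ (i + j) / i := by
        field_simp
        ring

lemma sum_convolution_le_of_abs_le_pow_div {b : ℕ → ℝ} {r : ℝ} {k : ℕ} (hr : 0 ≤ r)
    (hb : ∀ i, 1 ≤ i → i ≤ k → |b i| ≤ r ^ i / i) :
    ∑ i ∈ Ico 1 (k + 1), |b (k + 1 - i)| * |b i| * ((k + 1 - i : ℕ) : ℝ) ≤ k * r ^ (k + 1) := by
  calc ∑ i ∈ Ico 1 (k + 1), |b (k + 1 - i)| * |b i| * ((k + 1 - i : ℕ) : ℝ)
      ≤ ∑ i ∈ Ico 1 (k + 1), r ^ (k + 1) * (1 / (i : ℝ)) := by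
        refine sum_le_sum fun i hi => ?_
        obtain ⟨hi1, hik⟩ := mem_Ico.mp hi
        have hsplit : i + (k + 1 - i) = k + 1 := by omega
        have := abs_mul_abs_mul_le_pow_div (by omega : 0 < k + 1 - i)
          (hb (k + 1 - i) (by omega) (by omega)) (hb i hi1 (by omega))
        rwa [hsplit, ← mul_one_div] at this
    _ = r ^ (k + 1) * ∑ i ∈ Ico 1 (k + 1), 1 / (i : ℝ) := (mul_sum ..).symm
    _ ≤ r ^ (k + 1) * k := by gcongr; exact sum_Ico_one_one_div_le k
    _ = k * r ^ (k + 1) := mul_comm ..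

theorem homoclinic_bound_induction_step_general (v ρ M : ℝ) (hM : 0 < M)
    (k : ℕ) (b : ℕ → ℝ)
    (hpos : 0 < (((k : ℝ) + 1) ^ 3 - 1) * ρ ^ 2 + (((k : ℝ) + 1) ^ 2 - 1) * ρ - (k : ℝ) * v)
    (hfrac : (k : ℝ) / ((((k : ℝ) + 1) ^ 3 - 1) * ρ ^ 2 + (((k : ℝ) + 1) ^ 2 - 1) * ρ - (k : ℝ) * v)
      ≤ 1 / ((k : ℝ) + 1))
    (hind : ∀ i : ℕ, 1 ≤ i → i ≤ k → |b i| ≤ |b 1| ^ i / ((i : ℝ) * M ^ i))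
    (hrec : |b (k + 1)| ≤
      (1 / ((((k : ℝ) + 1) ^ 3 - 1) * ρ ^ 2 + (((k : ℝ) + 1) ^ 2 - 1) * ρ - (k : ℝ) * v)) *
        ∑ i ∈ Finset.Ico 1 (k + 1), |b (k + 1 - i)| * |b i| * ((k + 1 - i : ℕ) : ℝ)) :
    |b (k + 1)| ≤ |b 1| ^ (k + 1) / (((k : ℝ) + 1) * M ^ (k + 1)) := by
  set h := (((k : ℝ) + 1) ^ 3 - 1) * ρ ^ 2 + (((k : ℝ) + 1) ^ 2 - 1) * ρ - (k : ℝ) * v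
  set r := |b 1| / M with hr
  have hpow_div (n : ℕ) : |b 1| ^ n / ((n : ℝ) * M ^ n) = r ^ n / n := by
    rw [hr, div_pow, div_div, mul_comm]
  have hsum := sum_convolution_le_of_abs_le_pow_div (by positivity : 0 ≤ r)
    fun i hi1 hik => (hind i hi1 hik).trans_eq (hpow_div i)
  calc |b (k + 1)| ≤ 1 / h * (k * r ^ (k + 1)) :=
        hrec.trans (mul_le_mul_of_nonneg_left hsum (by positivity))
    _ = k / h * r ^ (k + 1) := by ring
    _ ≤ 1 / ((k : ℝ) + 1) * r ^ (k + 1) := by gcongr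
    _ = |b 1| ^ (k + 1) / (((k : ℝ) + 1) * M ^ (k + 1)) := by
        rw [hr, div_pow]
        field_simp

/-- Induction step for the geometric bound on the homoclinic-orbit series
coefficients: if `h_{k+1}(ρ) > 0` with `k/h_{k+1}(ρ) ≤ 1/(k+1)`, if
`|b_i| ≤ |b₁|^i/(i·M^i)` for `1 ≤ i ≤ k`, and if
`|b_{k+1}| ≤ (1/h_{k+1}(ρ))·Σ_{i=1}^{k} |b_{k+1-i}||b_i|(k+1-i)`, then
`|b_{k+1}| ≤ |b₁|^{k+1}/((k+1)·M^{k+1})`. -/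
theorem homoclinic_bound_induction_step (v ρ M : ℝ) (hM : 0 < M)
    (k : ℕ) (hk : 1 ≤ k) (b : ℕ → ℝ)
    (hpos : 0 < (((k : ℝ) + 1) ^ 3 - 1) * ρ ^ 2 + (((k : ℝ) + 1) ^ 2 - 1) * ρ - (k : ℝ) * v)
    (hfrac : (k : ℝ) / ((((k : ℝ) + 1) ^ 3 - 1) * ρ ^ 2 + (((k : ℝ) + 1) ^ 2 - 1) * ρ - (k : ℝ) * v)
      ≤ 1 / ((k : ℝ) + 1))
    (hind : ∀ i : ℕ, 1 ≤ i → i ≤ k → |b i| ≤ |b 1| ^ i / ((i : ℝ) * M ^ i))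
    (hrec : |b (k + 1)| ≤
      (1 / ((((k : ℝ) + 1) ^ 3 - 1) * ρ ^ 2 + (((k : ℝ) + 1) ^ 2 - 1) * ρ - (k : ℝ) * v)) *
        ∑ i ∈ Finset.Ico 1 (k + 1), |b (k + 1 - i)| * |b i| * ((k + 1 - i : ℕ) : ℝ)) :
    |b (k + 1)| ≤ |b 1| ^ (k + 1) / (((k : ℝ) + 1) * M ^ (k + 1)) :=
  homoclinic_bound_induction_step_general v ρ M hM k b hpos hfrac hind hrec
end
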